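/- arXiv:1106.0778 — 3 statements merged into one kernel-verified Lean document; each statement's English description precedes it below -/
import Mathlib

section
/- In the game G_n, player 1 wins every node: the player-1 strategy τ that moves from e_i to h_i for every i ensures that every play, regardless of player 0's choices, eventually reaches the self-loop at node x, which has odd priority 1. -/
inductive GNode (n : ℕ)
  | x | s | c | r
  | t (i : Fin (2*n)) | a (i : Fin (2*n))
  | d (i : Fin n) | e (i : Fin n) | g (i : Fin n)
  | k (i : Fin n) | f (i : Fin n) | h (i : Fin n)
  deriving DecidableEq, Fintype

/-- Priorities of `G_n` (indices 0-based; 1-based index is `i+1`). -/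
def prio (n : ℕ) : GNode n → ℕ
  | .x => 1
  | .s => 8*n + 6
  | .c => 8*n + 4
  | .r => 8*n + 8
  | .t i => 4*n + 2*(i.1+1) + 1
  | .a i => 4*n + 2*(i.1+1) + 2
  | .d i => 4*(i.1+1) + 1
  | .e i => 4*(i.1+1) + 2
  | .g i => 4*(i.1+1) + 4
  | .k i => 8*n + 4*(i.1+1) + 7
  | .f i => 8*n + 4*(i.1+1) + 9
  | .h i => 8*n + 4*(i.1+1) + 10

/-- Edge relation of the restricted graph `G_n|_τ`, where player 1's strategy
`τ` chooses `e_i → h_i` for every `i` (player-1 nodes `a_i, f_i, h_i, x` have a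
unique successor anyway), and player-0 nodes keep all their successors from the
edge table of `G_n`. -/
def Etau (n : ℕ) (v w : GNode n) : Prop :=
  match v with
  | .t i => w = .s ∨ w = .r ∨ (i.1 = 0 ∧ w = .c) ∨
      (∃ j : Fin (2*n), j.1 + 1 = i.1 ∧ w = .t j)
  | .a i => w = .t i
  | .c => w = .s ∨ w = .r
  | .d i => w = .s ∨ w = .r ∨ w = .e i ∨
      (∃ j : Fin (2*n), j.1 < 2 * i.1 + 2 ∧ w = .a j)
  | .e i => w = .h i
  | .g i => w = .f i ∨ w = .k i
  | .k i => w = .x ∨ (∃ j : Fin n, i.1 < j.1 ∧ w = .g j)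
  | .f i => w = .e i
  | .h i => w = .k i
  | .s => w = .x ∨ (∃ j : Fin n, w = .f j)
  | .r => w = .x ∨ (∃ j : Fin n, w = .g j)
  | .x => w = .x

/-- A rank that strictly decreases along `Etau` edges away from `x`. -/
def rnk (n : ℕ) : GNode n → ℕ
  | .x => 0
  | .k i => 5*(n-1-i.1)+1
  | .h i => 5*(n-1-i.1)+2
  | .e i => 5*(n-1-i.1)+3
  | .f i => 5*(n-1-i.1)+4
  | .g i => 5*(n-1-i.1)+5
  | .s => 5*n+1
  | .r => 5*n+1
  | .c => 5*n+2
  | .t i => 5*n+3+2*i.1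
  | .a i => 5*n+4+2*i.1
  | .d i => 5*n+4*i.1+7

lemma rnk_pos (n : ℕ) (v : GNode n) (h : v ≠ GNode.x) : 0 < rnk n v := by
  cases v <;> simp [rnk] at h ⊢

lemma rnk_dec (n : ℕ) (v w : GNode n) (he : Etau n v w) (h : v ≠ GNode.x) :
    rnk n w < rnk n v := by
  cases v with
  | x => exact absurd rfl h
  | s =>
    rcases he with rfl | ⟨j, rfl⟩
    · simp [rnk]
    · have := j.2; simp [rnk]; omega
  | r =>
    rcases he with rfl | ⟨j, rfl⟩
    · simp [rnk]
    · have := j.2; simp [rnk]; omega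
  | c =>
    rcases he with rfl | rfl <;> simp [rnk]
  | t i =>
    rcases he with rfl | rfl | ⟨h0, rfl⟩ | ⟨j, hj, rfl⟩ <;> simp [rnk] <;> omega
  | a i =>
    subst he; simp [rnk]
  | d i =>
    rcases he with rfl | rfl | rfl | ⟨j, hj, rfl⟩
    · simp [rnk]; omega
    · simp [rnk]; omega
    · have := i.2; simp [rnk]; omega
    · simp [rnk]; omega
  | e i =>
    subst he; simp [rnk]
  | g i =>
    rcases he with rfl | rfl <;> simp [rnk]
  | k i =>
    rcases he with rfl | ⟨j, hj, rfl⟩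
    · simp [rnk]
    · have := j.2; have := i.2; simp [rnk]; omega
  | f i =>
    subst he; simp [rnk]
  | h i =>
    subst he; simp [rnk]

/-- In `G_n` with player 1 playing `τ(e_i) = h_i`, every play — regardless of
player 0's choices — eventually reaches and stays in the self-loop at `x`,
whose priority `1` is odd; hence player 1 wins every node of `G_n`. -/
theorem player_one_wins (n : ℕ) (hn : 0 < n)
    (p : ℕ → GNode n) (hp : ∀ k, Etau n (p k) (p (k + 1))) :
    (∃ N, ∀ k, N ≤ k → p k = GNode.x) ∧ Odd (prio n GNode.x) := by
  refine ⟨⟨rnk n (p 0), ?_⟩, ⟨0, rfl⟩⟩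
  have hx : ∀ k, p k = GNode.x → p (k+1) = GNode.x := by
    intro k h
    have := hp k; rw [h] at this; exact this
  have hstay : ∀ k j, p k = GNode.x → p (k + j) = GNode.x := by
    intro k j hk
    induction j with
    | zero => exact hk
    | succ j ih => exact hx _ ih
  have key : ∀ m k, rnk n (p k) ≤ m → p (k + m) = GNode.x := by
    intro m
    induction m with
    | zero =>
      intro k hk
      by_contra h
      have := rnk_pos n (p k) h
      omega
    | succ m ih =>
      intro k hk
      by_cases h : p k = GNode.x
      · exact hstay k _ h
      · have hd := rnk_dec n (p k) (p (k+1)) (hp k) h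
        have : p (k + 1 + m) = GNode.x := ih (k+1) (by omega)
        have heq : k + 1 + m = k + (m + 1) := by omega
        rwa [heq] at this
  intro k hk
  have h0 : p (0 + rnk n (p 0)) = GNode.x := key _ 0 le_rfl
  simp only [Nat.zero_add] at h0
  have := hstay (rnk n (p 0)) (k - rnk n (p 0)) h0
  rwa [Nat.add_sub_cancel' hk] at this
end

section
/- In the restricted graph G_n|_τ, where τ is the player-1 strategy with τ(e_i) = h_i for all i, the only cycle is the self-loop at x; equivalently, removing the edges e_i → d_i from G_n makes every cycle pass through x. -/
def mu (n : ℕ) : GNode n → ℕ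
  | .x => 0
  | .k i => 5*(n - i.1)
  | .h i => 5*(n - i.1) + 1
  | .e i => 5*(n - i.1) + 2
  | .f i => 5*(n - i.1) + 3
  | .g i => 5*(n - i.1) + 4
  | .s => 5*n + 4
  | .r => 5*n + 5
  | .c => 5*n + 6
  | .t i => 5*n + 7 + i.1
  | .a i => 5*n + 8 + i.1
  | .d i => 5*n + 10 + 2*i.1

lemma mu_step (n : ℕ) (v w : GNode n) (h : Etau n v w) :
    v = GNode.x ∨ mu n w < mu n v := by
  cases v with
  | x => exact Or.inl rfl
  | s => right; rcases h with rfl | ⟨j, rfl⟩ <;> simp only [mu] <;> omega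
  | r =>
    right
    rcases h with rfl | ⟨j, rfl⟩ <;> simp only [mu] <;> omega
  | c => right; rcases h with rfl | rfl <;> simp only [mu] <;> omega
  | t i =>
    right
    rcases h with rfl | rfl | ⟨hi, rfl⟩ | ⟨j, hj, rfl⟩ <;> simp only [mu] <;> omega
  | a i => right; subst h; simp only [mu]; omega
  | d i =>
    right
    rcases h with rfl | rfl | rfl | ⟨j, hj, rfl⟩ <;> simp only [mu] <;> omega
  | e i => right; subst h; simp only [mu]; omega
  | g i => right; rcases h with rfl | rfl <;> simp only [mu] <;> omega
  | k i =>
    right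
    have hi := i.is_lt
    rcases h with rfl | ⟨j, hj, rfl⟩ <;> simp only [mu] <;> omega
  | f i => right; subst h; simp only [mu]; omega
  | h i => right; subst h; simp only [mu]; omega

lemma mu_mono (n : ℕ) (w v : GNode n)
    (h : Relation.ReflTransGen (Etau n) w v) : mu n v ≤ mu n w := by
  induction h with
  | refl => exact le_rfl
  | tail hab hbc ih =>
    rcases mu_step n _ _ hbc with rfl | hlt
    · obtain rfl : _ = GNode.x := hbc
      exact ih
    · omega

/-- In the restricted graph `G_n|_τ` (player 1 fixing `e_i → h_i`), the only
cycle is the self-loop at `x`: every node lying on a cycle is `x`. -/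
theorem only_cycle_is_x (n : ℕ) (hn : 0 < n) (v w : GNode n)
    (hvw : Etau n v w) (hwv : Relation.ReflTransGen (Etau n) w v) :
    v = GNode.x := by
  rcases mu_step n v w hvw with rfl | hlt
  · rfl
  · exact absurd (mu_mono n w v hwv) (by omega)
end

section
/- In the graph G_n|_τ (as above), there is a path from every node to the sink x; combined with x having the unique minimal priority 1, x is the 1-sink of G_n. -/
/-- In `G_n|_τ` there is a path from every node to `x`; together with `x`
carrying the self-loop of odd priority `1`, which is the unique minimal
priority of the game, `x` is the 1-sink of `G_n`. -/
theorem x_is_one_sink (n : ℕ) (hn : 0 < n) :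
    (∀ v : GNode n, Relation.ReflTransGen (Etau n) v GNode.x) ∧
    Etau n GNode.x GNode.x ∧ Odd (prio n GNode.x) ∧
    (∀ v : GNode n, v ≠ GNode.x → prio n GNode.x < prio n v) := by
  have hk : ∀ i : Fin n, Relation.ReflTransGen (Etau n) (GNode.k i) GNode.x :=
    fun i => Relation.ReflTransGen.single (Or.inl rfl)
  have hh : ∀ i : Fin n, Relation.ReflTransGen (Etau n) (GNode.h i) GNode.x :=
    fun i => Relation.ReflTransGen.head rfl (hk i)
  have he : ∀ i : Fin n, Relation.ReflTransGen (Etau n) (GNode.e i) GNode.x :=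
    fun i => Relation.ReflTransGen.head rfl (hh i)
  have hs : Relation.ReflTransGen (Etau n) GNode.s GNode.x :=
    Relation.ReflTransGen.single (Or.inl rfl)
  have ht : ∀ i : Fin (2*n), Relation.ReflTransGen (Etau n) (GNode.t i) GNode.x :=
    fun i => Relation.ReflTransGen.head (Or.inl rfl) hs
  refine ⟨?_, rfl, ⟨0, rfl⟩, ?_⟩
  · intro v
    cases v with
    | x => exact Relation.ReflTransGen.refl
    | s => exact hs
    | c => exact Relation.ReflTransGen.head (Or.inl rfl) hs
    | r => exact Relation.ReflTransGen.single (Or.inl rfl)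
    | t i => exact ht i
    | a i => exact Relation.ReflTransGen.head rfl (ht i)
    | d i => exact Relation.ReflTransGen.head (Or.inl rfl) hs
    | e i => exact he i
    | g i => exact Relation.ReflTransGen.head (Or.inr rfl) (hk i)
    | k i => exact hk i
    | f i => exact Relation.ReflTransGen.head rfl (he i)
    | h i => exact hh i
  · intro v hv
    cases v with
    | x => exact absurd rfl hv
    | s => simp [prio]
    | c => simp [prio]
    | r => simp [prio]
    | t i => simp [prio]
    | a i => simp [prio]
    | d i => simp [prio]
    | e i => simp [prio]
    | g i => simp [prio]
    | k i => simp [prio]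
    | f i => simp [prio]
    | h i => simp [prio]
end
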